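/- Let λ ∈ ℝ with (13 − 2√30)/3 < λ < 5/6, and define χ(π) := λπ + λ − 2/3. Then for every π ∈ (0,1): 0 < χ(π) < 1; ζ(π) := (π+1)(χ(π)−π)·λ + 2χ(π)(1−χ(π)) > 0; and η(π) := (2π+1)χ(π) − π > 0. That is, the compressibility conditions H1^G and H2^G hold on the whole interval (0,1). -/
import Mathlib


noncomputable section

/-- The ideal gas Stephani universes with isotropic radiation have affine indicatrix
`χ(π) = λπ + λ − 2/3`; for `(13 − 2√30)/3 < λ < 5/6` the compressibility conditions
H1^G and H2^G hold on the whole interval `(0,1)`: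
`0 < χ < 1`, `ζ(π) = (π+1)(χ−π)λ + 2χ(1−χ) > 0` and `η(π) = (2π+1)χ − π > 0`. -/
theorem isotropic_radiation_ideal_gas_compressibility
    (lam : ℝ) (hlam1 : (13 - 2 * Real.sqrt 30) / 3 < lam) (hlam2 : lam < 5 / 6) :
    ∀ π : ℝ, 0 < π → π < 1 →
      (0 < lam * π + lam - 2 / 3 ∧ lam * π + lam - 2 / 3 < 1)
      ∧ 0 < (π + 1) * ((lam * π + lam - 2 / 3) - π) * lam
          + 2 * (lam * π + lam - 2 / 3) * (1 - (lam * π + lam - 2 / 3))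
      ∧ 0 < (2 * π + 1) * (lam * π + lam - 2 / 3) - π := by
  intro π hπ0 hπ1
  have hs : Real.sqrt 30 ^ 2 = 30 := Real.sq_sqrt (by norm_num)
  have hs0 : (0:ℝ) ≤ Real.sqrt 30 := Real.sqrt_nonneg 30
  have hsu : Real.sqrt 30 < 11 / 2 := by nlinarith [hs, hs0]
  have hl23 : 2 / 3 < lam := by nlinarith
  -- 13 - 3 lam > 0, and 2√30 > 13 - 3 lam, squaring gives discriminant fact
  have h13 : 0 < 13 - 3 * lam := by linarith
  have hsq : (13 - 3 * lam) ^ 2 < 120 := by nlinarith [hs, hs0]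
  have hdisc : 9 * lam ^ 2 - 78 * lam + 49 < 0 := by nlinarith
  refine ⟨⟨by nlinarith, by nlinarith⟩, ?_, ?_⟩
  · nlinarith [mul_pos (mul_pos (show (0:ℝ) < lam - 2/3 by linarith)
        (show (0:ℝ) < 10/3 - lam by linarith)) (show (0:ℝ) < 1 - π by linarith),
      mul_pos (mul_pos (show (0:ℝ) < lam - 2/3 by linarith)
        (show (0:ℝ) < 5/6 - lam by linarith)) hπ0,
      mul_pos (mul_pos (mul_pos (show (0:ℝ) < lam by linarith)
        (show (0:ℝ) < lam + 1 by linarith)) hπ0) (show (0:ℝ) < 1 - π by linarith)]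
  · nlinarith [sq_nonneg (4 * lam * π + 3 * lam - 7/3), hdisc,
      mul_pos hπ0 (show (0:ℝ) < 1 - π by linarith)]
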